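/- arXiv:2511.19983 — 2 statements merged into one kernel-verified Lean document; each statement's English description precedes it below -/
import Mathlib

section
/- For every real θ with |sin θ| ≤ 1 and every k ≥ 2, let φ(θ) = arcsin( sin^k θ / √(cos^{2k} θ + sin^{2k} θ) ). Then there exists a constant C (depending on k) such that |φ(θ) − θ^k| ≤ C·|θ|^{k+2} for all θ with |θ| ≤ 1/2. -/
/-!
Write `x = sinᵏθ / N` with `N = √(cos^{2k}θ + sin^{2k}θ)` and split
`φ - θᵏ = (arcsin x - x) + (x - sinᵏθ) + (sinᵏθ - θᵏ)`.
Since `arcsin y - y` is cubic in `y` (by Jordan's inequality `|arcsin y| ≤ π/2 |y|`),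
the first term is `O(|x|³) = O(|θ|^{3k})`. The second is `x (1 - N)`, where
`0 ≤ 1 - N ≤ k sin²θ` by `a^k + b^k ≤ (a + b)^k` and Bernoulli's inequality,
and `N ≥ cosᵏθ ≥ 2⁻ᵏ`, so `|x| ≤ (2|θ|)ᵏ`.
The third is `O(k |θ|^{k+2})` because `sin θ - θ` is cubic.
-/

open Real

lemma Real.abs_arcsin_le_pi_div_two_mul_abs {x : ℝ} (hx : |x| ≤ 1) :
    |arcsin x| ≤ π / 2 * |x| := by
  obtain ⟨hx₁, hx₂⟩ := abs_le.1 hx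
  have hJordan :=
    mul_abs_le_abs_sin (abs_le.2 ⟨neg_pi_div_two_le_arcsin x, arcsin_le_pi_div_two x⟩)
  rw [sin_arcsin hx₁ hx₂, div_mul_eq_mul_div, div_le_iff₀ pi_pos] at hJordan
  linarith

lemma Real.abs_arcsin_sub_self_le {x : ℝ} (hx : |x| ≤ 1) : |arcsin x - x| ≤ |x| ^ 3 := by
  obtain ⟨hx₁, hx₂⟩ := abs_le.1 hx
  calc |arcsin x - x| = |arcsin x - sin (arcsin x)| := by rw [sin_arcsin hx₁ hx₂]
    _ ≤ |arcsin x| ^ 3 / 6 := abs_sub_sin_le _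
    _ ≤ (π / 2 * |x|) ^ 3 / 6 := by gcongr; exact abs_arcsin_le_pi_div_two_mul_abs hx
    _ = (π / 2) ^ 3 / 6 * |x| ^ 3 := by ring
    _ ≤ |x| ^ 3 := by
      have hπ : (π / 2) ^ 3 ≤ (3.15 / 2) ^ 3 := by gcongr; linarith [pi_lt_d2]
      have : (π / 2) ^ 3 / 6 ≤ 1 := by linarith
      nlinarith [pow_nonneg (abs_nonneg x) 3]

lemma Real.abs_sin_pow_sub_pow_le (θ : ℝ) (k : ℕ) :
    |sin θ ^ k - θ ^ k| ≤ k / 6 * |θ| ^ (k + 2) := by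
  obtain _ | k := k
  · simp
  have hmax : max |sin θ| |θ| = |θ| := max_eq_right abs_sin_le_abs
  calc |sin θ ^ (k + 1) - θ ^ (k + 1)|
      ≤ |sin θ - θ| * (k + 1 : ℕ) * max |sin θ| |θ| ^ k := abs_pow_sub_pow_le ..
    _ ≤ |θ| ^ 3 / 6 * (k + 1 : ℕ) * |θ| ^ k := by
      rw [hmax, abs_sub_comm]; gcongr; exact abs_sub_sin_le θ
    _ = (k + 1 : ℕ) / 6 * |θ| ^ (k + 1 + 2) := by ring

lemma abs_one_sub_sqrt_pow_add_pow_le {a b : ℝ} (ha : 0 ≤ a) (hb : 0 ≤ b) (hab : a + b = 1)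
    {n : ℕ} (hn : n ≠ 0) : |1 - √(a ^ n + b ^ n)| ≤ n * b := by
  set t := a ^ n + b ^ n
  have ht₀ : 0 ≤ t := by positivity
  have ht₁ : t ≤ 1 := by simpa [hab] using pow_add_pow_le ha hb hn
  have hBernoulli : 1 + n * (a - 1) ≤ a ^ n := one_add_mul_sub_le_pow (by linarith) n
  have hsqrt₁ : √t ≤ 1 := sqrt_le_one.2 ht₁
  have hsqrt : t ≤ √t := by
    calc t = √t * √t := (mul_self_sqrt ht₀).symm
      _ ≤ 1 * √t := by gcongr
      _ = √t := one_mul _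
  rw [abs_of_nonneg (by linarith)]
  nlinarith [pow_nonneg hb n]

noncomputable def postselectionNorm (k : ℕ) (θ : ℝ) : ℝ :=
  √(cos θ ^ (2 * k) + sin θ ^ (2 * k))

section postselectionNorm

variable (k : ℕ) {θ : ℝ}

lemma abs_one_sub_postselectionNorm_le (hk : k ≠ 0) :
    |1 - postselectionNorm k θ| ≤ k * θ ^ 2 :=
  calc |1 - postselectionNorm k θ| ≤ k * sin θ ^ 2 := by
        rw [postselectionNorm, pow_mul, pow_mul]
        exact abs_one_sub_sqrt_pow_add_pow_le (sq_nonneg _) (sq_nonneg _)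
          (cos_sq_add_sin_sq θ) hk
    _ ≤ k * θ ^ 2 := by gcongr k * ?_; exact sin_sq_le_sq

lemma abs_cos_pow_le_postselectionNorm : |cos θ| ^ k ≤ postselectionNorm k θ := by
  rw [← abs_pow]
  refine abs_le_sqrt ?_
  rw [← pow_mul, mul_comm]
  exact le_add_of_nonneg_right (Even.pow_nonneg (even_two_mul k) _)

lemma half_pow_le_postselectionNorm (hθ : |θ| ≤ 1 / 2) :
    (1 / 2) ^ k ≤ postselectionNorm k θ := by
  have hθ₂ : θ ^ 2 ≤ 1 / 4 := by nlinarith [sq_abs θ, abs_nonneg θ]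
  have hcos : 1 / 2 ≤ |cos θ| := by
    linarith [one_sub_sq_div_two_le_cos (x := θ), le_abs_self (cos θ)]
  exact (pow_le_pow_left₀ (by norm_num) hcos k).trans (abs_cos_pow_le_postselectionNorm k)

lemma abs_sin_pow_div_postselectionNorm_le (hθ : |θ| ≤ 1 / 2) :
    |sin θ ^ k / postselectionNorm k θ| ≤ (2 * |θ|) ^ k := by
  have hN := half_pow_le_postselectionNorm k hθ
  have hN₀ : 0 < postselectionNorm k θ := lt_of_lt_of_le (by positivity) hN
  rw [abs_div, abs_pow, abs_of_pos hN₀, div_le_iff₀ hN₀]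
  calc |sin θ| ^ k ≤ |θ| ^ k := pow_le_pow_left₀ (abs_nonneg _) abs_sin_le_abs k
    _ = (2 * |θ|) ^ k * (1 / 2) ^ k := by rw [← mul_pow]; ring
    _ ≤ (2 * |θ|) ^ k * postselectionNorm k θ := by gcongr

lemma abs_sin_pow_div_postselectionNorm_sub_le (hk : k ≠ 0) (hθ : |θ| ≤ 1 / 2) :
    |sin θ ^ k / postselectionNorm k θ - sin θ ^ k| ≤ k * 2 ^ k * |θ| ^ (k + 2) := by
  have hN : postselectionNorm k θ ≠ 0 :=
    (lt_of_lt_of_le (by positivity) (half_pow_le_postselectionNorm k hθ)).ne'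
  calc |sin θ ^ k / postselectionNorm k θ - sin θ ^ k|
      = |sin θ ^ k / postselectionNorm k θ| * |1 - postselectionNorm k θ| := by
        rw [← abs_mul]; congr 1; field_simp
    _ ≤ (2 * |θ|) ^ k * (k * θ ^ 2) := by
        gcongr
        · exact abs_sin_pow_div_postselectionNorm_le k hθ
        · exact abs_one_sub_postselectionNorm_le k hk
    _ = k * 2 ^ k * |θ| ^ (k + 2) := by rw [← sq_abs θ]; ring

end postselectionNorm

/-- The effective logical angle `φ(θ) = arcsin( sinᵏθ / √(cos^{2k}θ + sin^{2k}θ) )` of the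
projection scheme satisfies `|φ(θ) - θᵏ| ≤ C |θ|^{k+2}` for `|θ| ≤ 1/2`. -/
theorem effective_angle_approx (k : ℕ) (hk : 2 ≤ k) :
    ∃ C : ℝ, ∀ θ : ℝ, |θ| ≤ 1 / 2 →
      |Real.arcsin (Real.sin θ ^ k /
          Real.sqrt (Real.cos θ ^ (2 * k) + Real.sin θ ^ (2 * k))) - θ ^ k|
        ≤ C * |θ| ^ (k + 2) := by
  refine ⟨8 ^ k + k * 2 ^ k + k / 6, fun θ hθ => ?_⟩
  have hk₀ : k ≠ 0 := by omega
  change |arcsin (sin θ ^ k / postselectionNorm k θ) - θ ^ k| ≤ _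
  set x := sin θ ^ k / postselectionNorm k θ
  have hx : |x| ≤ (2 * |θ|) ^ k := abs_sin_pow_div_postselectionNorm_le k hθ
  have hx₁ : |x| ≤ 1 := hx.trans (pow_le_one₀ (by positivity) (by linarith))
  have hcube : |x| ^ 3 ≤ 8 ^ k * |θ| ^ (k + 2) :=
    calc |x| ^ 3 ≤ ((2 * |θ|) ^ k) ^ 3 := by gcongr
      _ = 8 ^ k * |θ| ^ (3 * k) := by
        rw [← pow_mul, mul_comm k 3, mul_pow, pow_mul 2 3 k]; norm_num
      _ ≤ 8 ^ k * |θ| ^ (k + 2) := by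
        gcongr 8 ^ k * ?_; exact pow_le_pow_of_le_one (abs_nonneg θ) (by linarith) (by omega)
  calc |arcsin x - θ ^ k| ≤ |arcsin x - x| + (|x - sin θ ^ k| + |sin θ ^ k - θ ^ k|) :=
        (abs_sub_le _ x _).trans (add_le_add le_rfl (abs_sub_le _ _ _))
    _ ≤ 8 ^ k * |θ| ^ (k + 2) + (k * 2 ^ k * |θ| ^ (k + 2) + k / 6 * |θ| ^ (k + 2)) := by
        gcongr
        · exact (abs_arcsin_sub_self_le hx₁).trans hcube
        · exact abs_sin_pow_div_postselectionNorm_sub_le k hk₀ hθ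
        · exact abs_sin_pow_sub_pow_le θ k
    _ = (8 ^ k + k * 2 ^ k + k / 6) * |θ| ^ (k + 2) := by ring
end

section
/- Let Z be the Pauli Z matrix, 0 ≤ P < 1/2, and Δ ∈ ℝ. Define channels E(ρ) = (1−P)ρ + P e^{iΔZ}ρe^{−iΔZ} and C(ρ) = (1−P)ρ + P e^{−iΔZ}ρe^{iΔZ} on 2×2 complex matrices. Then for every 2×2 matrix ρ, C(E(ρ)) = (1 − 2P(1−P)sin²Δ)·ρ + 2P(1−P)sin²Δ · ZρZ. -/
open Matrix NormedSpace

/-- The Pauli `Z` matrix. -/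
def PauliZ : Matrix (Fin 2) (Fin 2) ℂ := !![1, 0; 0, -1]

/-- The stochastic over-rotation error channel
`E(ρ) = (1-P) ρ + P e^{iΔZ} ρ e^{-iΔZ}`. -/
noncomputable def overRot (P Δ : ℝ) (ρ : Matrix (Fin 2) (Fin 2) ℂ) :
    Matrix (Fin 2) (Fin 2) ℂ :=
  ((1 - P : ℝ) : ℂ) • ρ +
    (P : ℂ) • (NormedSpace.exp ((Complex.I * (Δ : ℂ)) • PauliZ) * ρ *
      NormedSpace.exp ((-(Complex.I * (Δ : ℂ))) • PauliZ))

/-- The compensation channel `C(ρ) = (1-P) ρ + P e^{-iΔZ} ρ e^{iΔZ}`. -/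
noncomputable def compRot (P Δ : ℝ) (ρ : Matrix (Fin 2) (Fin 2) ℂ) :
    Matrix (Fin 2) (Fin 2) ℂ :=
  ((1 - P : ℝ) : ℂ) • ρ +
    (P : ℂ) • (NormedSpace.exp ((-(Complex.I * (Δ : ℂ))) • PauliZ) * ρ *
      NormedSpace.exp ((Complex.I * (Δ : ℂ)) • PauliZ))

/-! Since `Z² = 1`, the rotations are `U = cos Δ + i sin Δ Z` and `V = cos Δ - i sin Δ Z`, with
`V U = 1`. Expanding `C ∘ E` leaves `((1-P)² + P²) ρ + P(1-P) (UρV + VρU)`, and in `UρV + VρU`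
the cross terms cancel, leaving `2cos²Δ ρ + 2sin²Δ ZρZ`. -/

section
variable {R A : Type*} [CommRing R] [Ring A] [Algebra R A]

theorem sub_smul_mul_add_smul_of_mul_self_eq_one {Z : A} (hZ : Z * Z = 1) (a b : R) :
    (a • 1 - b • Z) * (a • 1 + b • Z) = (a ^ 2 - b ^ 2) • (1 : A) := by
  simp only [sub_mul, mul_add, smul_mul_smul_comm, one_mul, mul_one, hZ]
  module

theorem conj_add_conj_smul_one_add_smul (Z : A) (a b : R) (ρ : A) :
    (a • 1 + b • Z) * ρ * (a • 1 - b • Z) + (a • 1 - b • Z) * ρ * (a • 1 + b • Z) =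
      (2 * a ^ 2) • ρ - (2 * b ^ 2) • (Z * ρ * Z) := by
  simp only [sub_mul, mul_sub, mul_add, add_mul, smul_mul_assoc, mul_smul_comm, one_mul, mul_one]
  module

theorem mixture_comp_mixture_of_mul_eq_one {U V : A} (hVU : V * U = 1) (p q : R) (ρ : A) :
    q • (q • ρ + p • (U * ρ * V)) + p • (V * (q • ρ + p • (U * ρ * V)) * U) =
      (q ^ 2 + p ^ 2) • ρ + (p * q) • (U * ρ * V + V * ρ * U) := by
  have hcancel : V * (U * ρ * V) * U = ρ := by
    rw [← mul_assoc, ← mul_assoc, hVU, one_mul, mul_assoc, hVU, mul_one]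
  simp only [mul_add, add_mul, smul_mul_assoc, mul_smul_comm, hcancel, smul_add, smul_smul]
  module
end

theorem exp_smul_pauliZ (c : ℂ) :
    exp (c • PauliZ) =
      Complex.cosh c • (1 : Matrix (Fin 2) (Fin 2) ℂ) + Complex.sinh c • PauliZ := by
  have h : c • PauliZ = diagonal ![c, -c] := by
    ext i j; fin_cases i <;> fin_cases j <;> simp [PauliZ]
  rw [h, Matrix.exp_diagonal]
  ext i j
  fin_cases i <;> fin_cases j <;>
    simp [← Complex.exp_eq_exp_ℂ, PauliZ, Complex.cosh_add_sinh, ← sub_eq_add_neg,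
      Complex.cosh_sub_sinh]

theorem pauliZ_mul_self : PauliZ * PauliZ = 1 := by
  ext i j; fin_cases i <;> fin_cases j <;> simp [PauliZ]

theorem exp_I_mul_smul_pauliZ (c : ℂ) :
    exp ((Complex.I * c) • PauliZ) =
      Complex.cos c • (1 : Matrix (Fin 2) (Fin 2) ℂ) + (Complex.I * Complex.sin c) • PauliZ := by
  rw [exp_smul_pauliZ, mul_comm, Complex.cosh_mul_I, Complex.sinh_mul_I, mul_comm]

theorem comp_overRot_eq_dephasing_general (P : ℝ) (Δ : ℝ)
    (ρ : Matrix (Fin 2) (Fin 2) ℂ) :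
    compRot P Δ (overRot P Δ ρ) =
      ((1 - 2 * P * (1 - P) * Real.sin Δ ^ 2 : ℝ) : ℂ) • ρ +
        ((2 * P * (1 - P) * Real.sin Δ ^ 2 : ℝ) : ℂ) • (PauliZ * ρ * PauliZ) := by
  set c := Complex.cos Δ
  set s := Complex.I * Complex.sin Δ
  have hU : exp ((Complex.I * Δ) • PauliZ) = c • 1 + s • PauliZ := exp_I_mul_smul_pauliZ Δ
  have hV : exp ((-(Complex.I * Δ)) • PauliZ) = c • 1 - s • PauliZ := by
    rw [← mul_neg, exp_I_mul_smul_pauliZ, Complex.cos_neg, Complex.sin_neg, mul_neg, neg_smul,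
      ← sub_eq_add_neg]
  have hVU : (c • 1 - s • PauliZ) * (c • 1 + s • PauliZ) = 1 := by
    rw [sub_smul_mul_add_smul_of_mul_self_eq_one pauliZ_mul_self, mul_pow, Complex.I_sq,
      neg_one_mul, sub_neg_eq_add, Complex.cos_sq_add_sin_sq, one_smul]
  rw [compRot, overRot, hU, hV, mixture_comp_mixture_of_mul_eq_one hVU,
    conj_add_conj_smul_one_add_smul, mul_pow, Complex.I_sq, Complex.cos_sq']
  push_cast
  module

/-- Coherent error cancellation: composing the over-rotation channel with the compensation
channel gives an exact dephasing channel of strength `2P(1-P) sin²Δ`. -/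
theorem comp_overRot_eq_dephasing (P : ℝ) (hP0 : 0 ≤ P) (hP : P < 1 / 2) (Δ : ℝ)
    (ρ : Matrix (Fin 2) (Fin 2) ℂ) :
    compRot P Δ (overRot P Δ ρ) =
      ((1 - 2 * P * (1 - P) * Real.sin Δ ^ 2 : ℝ) : ℂ) • ρ +
        ((2 * P * (1 - P) * Real.sin Δ ^ 2 : ℝ) : ℂ) • (PauliZ * ρ * PauliZ) :=
  comp_overRot_eq_dephasing_general P Δ ρ
end
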